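/- Let W be a channel with input alphabet X = (Fin r → ZMod 2) (q = 2^r inputs). Then the symmetric capacity decomposes as I(W) = Σ_{m=1}^{r} c_m · Σ_{x₁∈X} Σ' J(P_{x₁,x}, Q_{x₁,x}), where c_m = (1/2^r)·∏_{j=1}^{m} 1/(2^r − 2^{j−1}); the inner sum Σ' is over all tuples x = (x₂,…,x_{m+1}) ∈ X^m that are linearly independent over ZMod 2 (equivalently: x₂ ≠ 0 and, for 3 ≤ j ≤ m+1, x_j is not equal to any {0,1}-combination of x₂,…,x_{j−1}); P_{x₁,x}(y) = 2^{−(m−1)}·Σ_{a∈(ZMod 2)^{m−1}} W( x₁ + Σ_{i=1}^{m−1} a_i·x_{i+1} ) y and Q_{x₁,x}(y) = 2^{−(m−1)}·Σ_{a∈(ZMod 2)^{m−1}} W( x₁ + x_{m+1} + Σ_{i=1}^{m−1} a_i·x_{i+1} ) y (sums of inputs taken coordinatewise in ZMod 2). -/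

import Mathlib

open Finset

/-- The symmetric capacity of a channel with uniform input (with `0 log 0 = 0`). -/
noncomputable def capty {X Y : Type*} [Fintype X] [Fintype Y] (W : X → Y → ℝ) : ℝ :=
  ∑ x, ∑ y, (1 / (Fintype.card X : ℝ)) * W x y *
    Real.logb 2 (W x y / ∑ x', (1 / (Fintype.card X : ℝ)) * W x' y)

/-- The symmetric capacity of the binary-input channel with output rows `p`, `p'`. -/
noncomputable def Jcap {Y : Type*} [Fintype Y] (p p' : Y → ℝ) : ℝ :=
  ∑ y, ((1 / 2 : ℝ) * p y * Real.logb 2 (p y / ((1 / 2 : ℝ) * (p y + p' y))) +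
        (1 / 2 : ℝ) * p' y * Real.logb 2 (p' y / ((1 / 2 : ℝ) * (p y + p' y))))

/-- `P_{x₁,x}(y) = 2^{-(m-1)} ∑_{a ∈ (ZMod 2)^{m-1}} W(x₁ + ∑ aᵢ x_{i+1}) y`, where the
tuple `(x₂, …, x_{m+1})` of length `m = m'+1` is given by `t : Fin (m'+1) → X`. -/
noncomputable def Pmix {r : ℕ} {Y : Type*} [Fintype Y] (W : (Fin r → ZMod 2) → Y → ℝ)
    (m : ℕ) (x1 : Fin r → ZMod 2) (t : Fin (m + 1) → Fin r → ZMod 2) : Y → ℝ :=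
  fun y => (1 / 2 ^ m : ℝ) *
    ∑ a : Fin m → ZMod 2, W (x1 + ∑ i, a i • t i.castSucc) y

/-- `Q_{x₁,x}(y) = 2^{-(m-1)} ∑_{a ∈ (ZMod 2)^{m-1}} W(x₁ + x_{m+1} + ∑ aᵢ x_{i+1}) y`. -/
noncomputable def Qmix {r : ℕ} {Y : Type*} [Fintype Y] (W : (Fin r → ZMod 2) → Y → ℝ)
    (m : ℕ) (x1 : Fin r → ZMod 2) (t : Fin (m + 1) → Fin r → ZMod 2) : Y → ℝ :=
  fun y => (1 / 2 ^ m : ℝ) *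
    ∑ a : Fin m → ZMod 2, W (x1 + t (Fin.last m) + ∑ i, a i • t i.castSucc) y


/-!
For a linearly independent `s : Fin m → X` let `A_{x,s}` be the average of the rows of `W` over the
coset `x + span s`, let `G` be the output distribution, and let `T_m = ∑_{s,x} D(A_{x,s} ‖ G)`,
summed over independent `s`. Then `T_0 = q · I(W)`, and `T_r = 0` because an independent
`r`-tuple spans all of `X`. Appending `v ∉ span s` cuts the coset into two halves, so
`A_{x,(s,v)}` is the midpoint of `P = A_{x,s}` and `Q = A_{x+v,s}`, and
`D(½(P+Q) ‖ G) = ½ D(P ‖ G) + ½ D(Q ‖ G) - J(P,Q)`.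
Summing over `x` (translation by `v` permutes the cosets) and over the `q - 2^m` choices of `v`
gives `T_{m+1} = (q - 2^m) T_m - S_m` with `S_m` the sum of the `J`'s, and unrolling this
recurrence from `T_0` to `T_r = 0` gives the decomposition.
-/

namespace Channel

lemma eq_sum_add_of_recurrence {T S c : ℕ → ℝ} (hT : ∀ k, T (k + 1) = c k * T k - S k) {n : ℕ}
    (hc : ∀ j < n, c j ≠ 0) :
    T 0 = ∑ k ∈ range n, (∏ j ∈ range (k + 1), 1 / c j) * S k
      + (∏ j ∈ range n, 1 / c j) * T n := by
  induction n with
  | zero => simp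
  | succ n ih =>
    rw [ih fun j hj => hc j (by omega), sum_range_succ, prod_range_succ, hT]
    field_simp [hc n (by omega)]
    ring

lemma mul_logb_div_eq_add {p a b : ℝ} (h : p ≠ 0 → a ≠ 0 ∧ b ≠ 0) :
    p * Real.logb 2 (p / b) = p * Real.logb 2 (p / a) + p * Real.logb 2 (a / b) := by
  rcases eq_or_ne p 0 with rfl | hp
  · simp
  obtain ⟨ha, hb⟩ := h hp
  rw [← mul_add, ← Real.logb_mul (div_ne_zero hp ha) (div_ne_zero ha hb), div_mul_div_cancel₀ ha]

section RelEntropy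

variable {Y : Type*} [Fintype Y]

noncomputable def relEntropy (p g : Y → ℝ) : ℝ :=
  ∑ y, p y * Real.logb 2 (p y / g y)

lemma relEntropy_self (g : Y → ℝ) : relEntropy g g = 0 := by
  refine sum_eq_zero fun y _ => ?_
  rcases eq_or_ne (g y) 0 with h | h <;> simp [h]

lemma relEntropy_midpoint {p q g : Y → ℝ} (hp : 0 ≤ p) (hq : 0 ≤ q)
    (hg : ∀ y, g y = 0 → p y = 0 ∧ q y = 0) :
    relEntropy (fun y => (1 / 2 : ℝ) * (p y + q y)) g
      = (1 / 2 : ℝ) * relEntropy p g + (1 / 2 : ℝ) * relEntropy q g - Jcap p q := by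
  simp only [relEntropy, Jcap, mul_sum, ← sum_add_distrib, ← sum_sub_distrib]
  refine sum_congr rfl fun y _ => ?_
  have hpy : 0 ≤ p y := hp y
  have hqy : 0 ≤ q y := hq y
  set m := (1 / 2 : ℝ) * (p y + q y)
  have hsplit : ∀ u, 0 ≤ u → u ≤ p y + q y → u * Real.logb 2 (u / g y)
      = u * Real.logb 2 (u / m) + u * Real.logb 2 (m / g y) := fun u hu hu' =>
    mul_logb_div_eq_add fun hu0 =>
      ⟨ne_of_gt (by simp only [m]; linarith [lt_of_le_of_ne hu (Ne.symm hu0)]),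
       fun hg0 => hu0 (by obtain ⟨h1, h2⟩ := hg y hg0; linarith)⟩
  rw [hsplit _ hpy (by linarith), hsplit _ hqy (by linarith)]
  ring

end RelEntropy

section OutputDist

variable {X Y : Type*} [Fintype X]

noncomputable def outputDist (W : X → Y → ℝ) (y : Y) : ℝ :=
  ∑ x, (1 / (Fintype.card X : ℝ)) * W x y

lemma capty_eq_mul_sum_relEntropy [Fintype Y] (W : X → Y → ℝ) :
    capty W = (1 / (Fintype.card X : ℝ)) * ∑ x, relEntropy (W x) (outputDist W) := by
  simp only [capty, relEntropy, outputDist, mul_sum, mul_assoc]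

lemma eq_zero_of_outputDist_eq_zero {W : X → Y → ℝ} (hW : ∀ x y, 0 ≤ W x y) {y : Y}
    (h : outputDist W y = 0) (x : X) : W x y = 0 := by
  have hcard : (1 / (Fintype.card X : ℝ)) ≠ 0 := by
    have := Fintype.card_pos_iff.2 ⟨x⟩
    positivity
  have := (sum_eq_zero_iff_of_nonneg fun x _ => mul_nonneg (by positivity) (hW x y)).1 h x
    (mem_univ x)
  exact (mul_eq_zero.1 this).resolve_left hcard

end OutputDist

section Counting

variable {K V : Type*} [Field K] [Fintype K] [AddCommGroup V] [Module K V] [Fintype V]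

open scoped Classical in
lemma card_filter_notMem_span {m : ℕ} {s : Fin m → V} (hs : LinearIndependent K s) :
    (#(univ.filter fun v => v ∉ Submodule.span K (Set.range s)) : ℝ)
      = Fintype.card V - Fintype.card K ^ m := by
  have hspan : #(univ.filter fun v => v ∈ Submodule.span K (Set.range s)) = Fintype.card K ^ m := by
    rw [← Fintype.card_subtype, Module.card_eq_pow_finrank (K := K), finrank_span_eq_card hs,
      Fintype.card_fin]
  have hsplit := card_filter_add_card_filter_not (s := univ)
    fun v : V => v ∈ Submodule.span K (Set.range s)
  rw [hspan, card_univ] at hsplit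
  rw [← hsplit]
  push_cast
  ring

open scoped Classical in
lemma sum_linearIndependent_succ {m : ℕ} (g : (Fin m → V) → ℝ) :
    ∑ t : Fin (m + 1) → V, (if LinearIndependent K t then g (Fin.init t) else 0)
      = ((Fintype.card V : ℝ) - Fintype.card K ^ m) *
        ∑ s : Fin m → V, (if LinearIndependent K s then g s else 0) := by
  rw [← (Fin.snocEquiv fun _ => V).sum_comp, Fintype.sum_prod_type, sum_comm, mul_sum]
  refine sum_congr rfl fun s _ => ?_
  simp only [Fin.snocEquiv, Equiv.coe_fn_mk, Fin.init_snoc, linearIndependent_finSnoc]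
  by_cases hs : LinearIndependent K s
  · simp only [hs, true_and, if_true]
    rw [sum_ite, sum_const_zero, add_zero, sum_const, nsmul_eq_mul, card_filter_notMem_span hs]
  · simp [hs]

end Counting

section Coset

variable {V Y : Type*} [AddCommGroup V] [Module (ZMod 2) V]

/-- For linearly independent `s`, the average of the rows of `W` over the coset `x + span s`. -/
noncomputable def cosetAvg (W : V → Y → ℝ) {m : ℕ} (x : V) (s : Fin m → V) (y : Y) : ℝ :=
  (1 / 2 ^ m : ℝ) * ∑ a : Fin m → ZMod 2, W (x + ∑ i, a i • s i) y

lemma cosetAvg_nonneg {W : V → Y → ℝ} (hW : ∀ x y, 0 ≤ W x y) {m : ℕ} (x : V)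
    (s : Fin m → V) : 0 ≤ cosetAvg W x s :=
  fun y => mul_nonneg (by positivity) (sum_nonneg fun _ _ => hW _ y)

lemma cosetAvg_eq_zero_of_outputDist_eq_zero [Fintype V] {W : V → Y → ℝ}
    (hW : ∀ x y, 0 ≤ W x y) {y : Y} (h : outputDist W y = 0) {m : ℕ} (x : V)
    (s : Fin m → V) : cosetAvg W x s y = 0 := by
  simp [cosetAvg, eq_zero_of_outputDist_eq_zero hW h]

lemma cosetAvg_succ (W : V → Y → ℝ) {m : ℕ} (x : V) (t : Fin (m + 1) → V) (y : Y) :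
    cosetAvg W x t y = (1 / 2 : ℝ) *
      (cosetAvg W x (Fin.init t) y + cosetAvg W (x + t (Fin.last m)) (Fin.init t) y) := by
  have sum_zmod_two : ∀ f : ZMod 2 → ℝ, ∑ c, f c = f 0 + f 1 := Fin.sum_univ_two
  have hsum : ∑ a : Fin (m + 1) → ZMod 2, W (x + ∑ i, a i • t i) y
      = ∑ b : Fin m → ZMod 2, W (x + ∑ i, b i • Fin.init t i) y
        + ∑ b : Fin m → ZMod 2, W (x + t (Fin.last m) + ∑ i, b i • Fin.init t i) y := by
    rw [← (Fin.snocEquiv fun _ => ZMod 2).sum_comp, Fintype.sum_prod_type, sum_zmod_two]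
    simp only [Fin.snocEquiv, Equiv.coe_fn_mk, Fin.sum_univ_castSucc, Fin.snoc_castSucc,
      Fin.snoc_last, zero_smul, add_zero, one_smul, Fin.init]
    congr 1
    exact sum_congr rfl fun _ _ => by rw [add_comm _ (t _), add_assoc]
  rw [cosetAvg, hsum, cosetAvg, cosetAvg, pow_succ]
  ring

lemma cosetAvg_basis [Fintype V] (W : V → Y → ℝ) {m : ℕ} (x : V)
    (b : Module.Basis (Fin m) (ZMod 2) V) : cosetAvg W x b = outputDist W := by
  funext y
  have hcard : Fintype.card V = 2 ^ m := by
    rw [Module.card_fintype b, ZMod.card, Fintype.card_fin]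
  rw [cosetAvg, outputDist, hcard, mul_sum]
  push_cast
  exact Fintype.sum_bijective (fun a => x + b.equivFun.symm a)
    ((Equiv.addLeft x).bijective.comp b.equivFun.symm.bijective) _ _
    fun a => by rw [Module.Basis.equivFun_symm_apply]

end Coset

section Decomposition

variable {V Y : Type*} [AddCommGroup V] [Module (ZMod 2) V] [Fintype V] [Fintype Y]

open scoped Classical in
noncomputable def cosetDivergence (W : V → Y → ℝ) (m : ℕ) : ℝ :=
  ∑ s : Fin m → V, if LinearIndependent (ZMod 2) s then
    ∑ x, relEntropy (cosetAvg W x s) (outputDist W) else 0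

open scoped Classical in
noncomputable def binarySplitSum (W : V → Y → ℝ) (m : ℕ) : ℝ :=
  ∑ x, ∑ t : Fin (m + 1) → V, if LinearIndependent (ZMod 2) t then
    Jcap (cosetAvg W x (Fin.init t)) (cosetAvg W (x + t (Fin.last m)) (Fin.init t)) else 0

lemma cosetDivergence_zero (W : V → Y → ℝ) :
    cosetDivergence W 0 = ∑ x, relEntropy (W x) (outputDist W) := by
  have hW : ∀ x (s : Fin 0 → V), cosetAvg W x s = W x := fun x s => by
    funext y
    simp [cosetAvg]
  simp [cosetDivergence, hW]

lemma cosetDivergence_finrank (W : V → Y → ℝ) :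
    cosetDivergence W (Module.finrank (ZMod 2) V) = 0 := by
  refine sum_eq_zero fun s _ => ?_
  split_ifs with hs
  · obtain ⟨b, rfl⟩ : ∃ b : Module.Basis _ (ZMod 2) V, ⇑b = s :=
      ⟨_, coe_basisOfLinearIndependentOfCardEqFinrank' s hs (Fintype.card_fin _)⟩
    simp only [cosetAvg_basis, relEntropy_self, sum_const_zero]
  · rfl

lemma sum_relEntropy_cosetAvg_succ {W : V → Y → ℝ} (hW : ∀ x y, 0 ≤ W x y) {m : ℕ}
    (t : Fin (m + 1) → V) :
    ∑ x, relEntropy (cosetAvg W x t) (outputDist W)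
      = ∑ x, relEntropy (cosetAvg W x (Fin.init t)) (outputDist W)
        - ∑ x, Jcap (cosetAvg W x (Fin.init t)) (cosetAvg W (x + t (Fin.last m)) (Fin.init t)) := by
  have hsplit : ∀ x, relEntropy (cosetAvg W x t) (outputDist W)
      = (1 / 2 : ℝ) * relEntropy (cosetAvg W x (Fin.init t)) (outputDist W)
        + (1 / 2 : ℝ) * relEntropy (cosetAvg W (x + t (Fin.last m)) (Fin.init t)) (outputDist W)
        - Jcap (cosetAvg W x (Fin.init t)) (cosetAvg W (x + t (Fin.last m)) (Fin.init t)) :=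
    fun x => by
      rw [show cosetAvg W x t = _ from funext (cosetAvg_succ W x t)]
      exact relEntropy_midpoint (cosetAvg_nonneg hW _ _) (cosetAvg_nonneg hW _ _) fun y hy =>
        ⟨cosetAvg_eq_zero_of_outputDist_eq_zero hW hy _ _,
          cosetAvg_eq_zero_of_outputDist_eq_zero hW hy _ _⟩
  have htranslate : ∑ x, relEntropy (cosetAvg W (x + t (Fin.last m)) (Fin.init t)) (outputDist W)
      = ∑ x, relEntropy (cosetAvg W x (Fin.init t)) (outputDist W) :=
    Equiv.sum_comp (Equiv.addRight (t (Fin.last m))) fun x =>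
      relEntropy (cosetAvg W x (Fin.init t)) _
  simp only [hsplit, sum_sub_distrib, sum_add_distrib, ← mul_sum, htranslate]
  ring

lemma cosetDivergence_succ {W : V → Y → ℝ} (hW : ∀ x y, 0 ≤ W x y) (m : ℕ) :
    cosetDivergence W (m + 1)
      = ((Fintype.card V : ℝ) - 2 ^ m) * cosetDivergence W m - binarySplitSum W m := by
  have hsum := sum_linearIndependent_succ (K := ZMod 2) (V := V) (m := m)
    fun s => ∑ x, relEntropy (cosetAvg W x s) (outputDist W)
  rw [ZMod.card, Nat.cast_ofNat] at hsum
  rw [cosetDivergence, cosetDivergence, ← hsum, binarySplitSum, sum_comm, ← sum_sub_distrib]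
  refine sum_congr rfl fun t _ => ?_
  split_ifs
  · exact sum_relEntropy_cosetAvg_succ hW t
  · simp

theorem capty_eq_sum_binarySplitSum {W : V → Y → ℝ} (hW : ∀ x y, 0 ≤ W x y) :
    capty W = ∑ m ∈ range (Module.finrank (ZMod 2) V),
      ((1 / (Fintype.card V : ℝ)) * ∏ j ∈ range (m + 1), 1 / ((Fintype.card V : ℝ) - 2 ^ j)) *
        binarySplitSum W m := by
  have hcard : (Fintype.card V : ℝ) = 2 ^ Module.finrank (ZMod 2) V := by
    rw [Module.card_eq_pow_finrank (K := ZMod 2), ZMod.card, Nat.cast_pow, Nat.cast_ofNat]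
  have hc : ∀ j < Module.finrank (ZMod 2) V, (Fintype.card V : ℝ) - 2 ^ j ≠ 0 := fun j hj => by
    rw [hcard]
    exact sub_ne_zero.2 (pow_lt_pow_right₀ one_lt_two hj).ne'
  rw [capty_eq_mul_sum_relEntropy, ← cosetDivergence_zero,
    eq_sum_add_of_recurrence (cosetDivergence_succ hW) hc, cosetDivergence_finrank, mul_zero,
    add_zero, mul_sum]
  simp only [mul_assoc]

end Decomposition

end Channel

open scoped Classical in
/-- The index `m ∈ range r` with tuples of length `m + 1` is the statement's `m = 1, …, r`. -/
theorem capacity_binary_decomposition_general (r : ℕ) {Y : Type*} [Fintype Y]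
    (W : (Fin r → ZMod 2) → Y → ℝ)
    (hpos : ∀ x y, 0 ≤ W x y) :
    capty W = ∑ m ∈ Finset.range r,
      ((1 / (2 ^ r : ℝ)) * ∏ j ∈ Finset.range (m + 1), (1 / ((2 ^ r : ℝ) - 2 ^ j))) *
        ∑ x1 : Fin r → ZMod 2, ∑ t : Fin (m + 1) → Fin r → ZMod 2,
          (if LinearIndependent (ZMod 2) t then Jcap (Pmix W m x1 t) (Qmix W m x1 t) else 0) := by
  have h := Channel.capty_eq_sum_binarySplitSum hpos
  rwa [Module.finrank_fin_fun, Fintype.card_fun, ZMod.card, Fintype.card_fin, Nat.cast_pow,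
    Nat.cast_ofNat] at h

open scoped Classical in
/-- decomposition of the symmetric capacity into symmetric capacities of
binary-input channels, summed over linearly independent tuples (the sum over `m ∈ range r`
with tuple length `m + 1` corresponds to the sum over `m = 1, …, r` of the statement). -/
theorem capacity_binary_decomposition (r : ℕ) (hr : 1 ≤ r) {Y : Type*} [Fintype Y] [Nonempty Y]
    (W : (Fin r → ZMod 2) → Y → ℝ)
    (hpos : ∀ x y, 0 ≤ W x y) (hrow : ∀ x, ∑ y, W x y = 1) :
    capty W = ∑ m ∈ Finset.range r,
      ((1 / (2 ^ r : ℝ)) * ∏ j ∈ Finset.range (m + 1), (1 / ((2 ^ r : ℝ) - 2 ^ j))) *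
        ∑ x1 : Fin r → ZMod 2, ∑ t : Fin (m + 1) → Fin r → ZMod 2,
          (if LinearIndependent (ZMod 2) t then Jcap (Pmix W m x1 t) (Qmix W m x1 t) else 0) :=
  capacity_binary_decomposition_general r W hpos
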